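/- arXiv:1307.4156 — 2 statements merged into one kernel-verified Lean document; each statement's English description precedes it below -/
import Mathlib

section
/- Let 1 < q < ∞, v ∈ ℝⁿ and 0 < λ < ‖v‖_{q̄}, and let x* = π_q(v) be the minimizer of g(x) = (1/2)‖x − v‖₂² + λ‖x‖_q. Then sgn(x*ᵢ) = sgn(vᵢ) for all i; 0 < |x*ᵢ| < |vᵢ| for every i with vᵢ ≠ 0 (in particular x*ᵢ = 0 whenever vᵢ = 0); and π_q(v) = sgn(v) ⊙ π_q(|v|), where ⊙, sgn and |·| act componentwise. -/
open scoped BigOperators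

/-- The vector ℓq norm for a real exponent `q`. -/
noncomputable def lqNormR {n : ℕ} (q : ℝ) (x : Fin n → ℝ) : ℝ :=
  (∑ i, |x i| ^ q) ^ (1 / q)

/-- The objective `g(x) = (1/2)‖x − v‖₂² + λ‖x‖_q`. -/
noncomputable def gObjR {n : ℕ} (q : ℝ) (lam : ℝ) (v x : Fin n → ℝ) : ℝ :=
  (1 / 2) * ∑ i, (x i - v i) ^ 2 + lam * lqNormR q x

/-!
The objective is strictly convex, so its minimizer is unique, and it is invariant under flipping
the signs of the same coordinates of `v` and `x`; uniqueness then carries the minimizer for `|v|`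
over to the one for `v`.

Since `λ < ‖v‖_q̄`, the Hölder-extremal direction `dᵢ = |vᵢ|^(q̄-2) vᵢ` satisfies
`λ ‖d‖_q < ⟨d, v⟩`, so `g` decreases from `0` along `d` and the minimizer `x` is nonzero.
Away from `0` the objective is differentiable, and the optimality condition reads
`vᵢ = (1 + K |xᵢ|^(q-2)) xᵢ` with `K = λ ‖x‖_q^(1-q) > 0`, which gives the sign and size
claims.
-/

open Finset

section

variable {n : ℕ}

lemma sum_abs_rpow_nonneg (q : ℝ) (x : Fin n → ℝ) : 0 ≤ ∑ i, |x i| ^ q :=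
  sum_nonneg fun _ _ => Real.rpow_nonneg (abs_nonneg _) q

lemma lqNormR_congr_abs {q : ℝ} {x y : Fin n → ℝ} (h : ∀ i, |x i| = |y i|) :
    lqNormR q x = lqNormR q y := by
  simp only [lqNormR, h]

lemma lqNormR_zero {q : ℝ} (hq : 0 < q) : lqNormR q (0 : Fin n → ℝ) = 0 := by
  simp [lqNormR, Real.zero_rpow hq.ne', Real.zero_rpow (inv_ne_zero hq.ne')]

lemma lqNormR_const_mul {q c : ℝ} (hq : 0 < q) (hc : 0 ≤ c) (x : Fin n → ℝ) :
    lqNormR q (fun i => c * x i) = c * lqNormR q x := by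
  have hterm : ∀ i, |c * x i| ^ q = c ^ q * |x i| ^ q := fun i => by
    rw [abs_mul, abs_of_nonneg hc, Real.mul_rpow hc (abs_nonneg _)]
  simp only [lqNormR, hterm, ← mul_sum]
  rw [Real.mul_rpow (by positivity) (sum_abs_rpow_nonneg q x), ← Real.rpow_mul hc,
    mul_one_div_cancel hq.ne', Real.rpow_one]

lemma lqNormR_add_le {q : ℝ} (hq : 1 ≤ q) (x y : Fin n → ℝ) :
    lqNormR q (fun i => x i + y i) ≤ lqNormR q x + lqNormR q y :=
  Real.Lp_add_le univ x y hq

lemma lqNormR_midpoint_le {q : ℝ} (hq : 1 ≤ q) (x y : Fin n → ℝ) :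
    lqNormR q (fun i => (x i + y i) / 2) ≤ (lqNormR q x + lqNormR q y) / 2 := by
  have hq0 : 0 < q := by linarith
  calc lqNormR q (fun i => (x i + y i) / 2)
      = lqNormR q (fun i => 2⁻¹ * x i + 2⁻¹ * y i) := by congr 1; funext i; ring
    _ ≤ lqNormR q (fun i => 2⁻¹ * x i) + lqNormR q (fun i => 2⁻¹ * y i) :=
        lqNormR_add_le hq _ _
    _ = (lqNormR q x + lqNormR q y) / 2 := by
        rw [lqNormR_const_mul hq0 (by norm_num), lqNormR_const_mul hq0 (by norm_num)]; ring

lemma sum_sq_midpoint_sub_lt {x y : Fin n → ℝ} (hxy : x ≠ y) (v : Fin n → ℝ) :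
    ∑ i, ((x i + y i) / 2 - v i) ^ 2 < (∑ i, (x i - v i) ^ 2 + ∑ i, (y i - v i) ^ 2) / 2 := by
  obtain ⟨i, hi⟩ := Function.ne_iff.1 hxy
  have hpos : 0 < ∑ j, (x j - y j) ^ 2 :=
    sum_pos' (fun j _ => sq_nonneg _) ⟨i, mem_univ i, pow_two_pos_of_ne_zero (sub_ne_zero.2 hi)⟩
  have hmid : ∀ j, ((x j + y j) / 2 - v j) ^ 2
      = ((x j - v j) ^ 2 + (y j - v j) ^ 2) / 2 - (x j - y j) ^ 2 / 4 := fun j => by ring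
  simp only [hmid, sum_sub_distrib, ← sum_div, sum_add_distrib]
  linarith

lemma gObjR_midpoint_lt {q lam : ℝ} (hq : 1 ≤ q) (hlam : 0 ≤ lam) (v : Fin n → ℝ)
    {x y : Fin n → ℝ} (hxy : x ≠ y) :
    gObjR q lam v (fun i => (x i + y i) / 2) < (gObjR q lam v x + gObjR q lam v y) / 2 := by
  have hsq := sum_sq_midpoint_sub_lt hxy v
  have hnorm := mul_le_mul_of_nonneg_left (lqNormR_midpoint_le hq x y) hlam
  simp only [gObjR]
  linarith

lemma eq_of_forall_gObjR_le {q lam : ℝ} (hq : 1 ≤ q) (hlam : 0 ≤ lam) {v x y : Fin n → ℝ}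
    (hx : ∀ z, gObjR q lam v x ≤ gObjR q lam v z)
    (hy : ∀ z, gObjR q lam v y ≤ gObjR q lam v z) : x = y := by
  by_contra hxy
  have hmid := gObjR_midpoint_lt hq hlam v hxy
  linarith [hx (fun i => (x i + y i) / 2), hy x]

lemma gObjR_mul_mul {q lam : ℝ} {ε : Fin n → ℝ} (hε : ∀ i, |ε i| = 1)
    (v z : Fin n → ℝ) :
    gObjR q lam (fun i => ε i * v i) (fun i => ε i * z i) = gObjR q lam v z := by
  have hsq : ∀ i, (ε i * z i - ε i * v i) ^ 2 = (z i - v i) ^ 2 := fun i => by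
    rw [← mul_sub, mul_pow, ← sq_abs (ε i), hε i, one_pow, one_mul]
  have hnorm : lqNormR q (fun i => ε i * z i) = lqNormR q z :=
    lqNormR_congr_abs fun i => by rw [abs_mul, hε i, one_mul]
  simp only [gObjR, hsq, hnorm]

lemma forall_gObjR_mul_le {q lam : ℝ} {ε : Fin n → ℝ} (hε : ∀ i, |ε i| = 1)
    {v y : Fin n → ℝ}
    (hy : ∀ z, gObjR q lam v y ≤ gObjR q lam v z) (z : Fin n → ℝ) :
    gObjR q lam (fun i => ε i * v i) (fun i => ε i * y i) ≤
      gObjR q lam (fun i => ε i * v i) z := by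
  have hz : z = fun i => ε i * (ε i * z i) := funext fun i => by
    rw [← mul_assoc, ← sq, ← sq_abs, hε i, one_pow, one_mul]
  rw [hz, gObjR_mul_mul hε, gObjR_mul_mul hε]
  exact hy _

lemma gObjR_mul_eq {q lam t : ℝ} (hq : 0 < q) (ht : 0 ≤ t) (v d : Fin n → ℝ) :
    gObjR q lam v (fun i => t * d i) =
      gObjR q lam v 0 + t * (t / 2 * ∑ i, d i ^ 2 - ∑ i, d i * v i + lam * lqNormR q d) := by
  have hsq : ∀ i, (t * d i - v i) ^ 2 = (0 - v i) ^ 2 + (t ^ 2 * d i ^ 2 - 2 * t * (d i * v i)) :=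
    fun i => by ring
  simp only [gObjR, lqNormR_const_mul hq ht, lqNormR_zero hq, Pi.zero_apply, hsq,
    sum_add_distrib, sum_sub_distrib, ← mul_sum]
  ring

lemma exists_gObjR_lt_gObjR_zero {q lam : ℝ} (hq : 0 < q) {v d : Fin n → ℝ}
    (hd : lam * lqNormR q d < ∑ i, d i * v i) : ∃ y, gObjR q lam v y < gObjR q lam v 0 := by
  set a := ∑ i, d i * v i - lam * lqNormR q d
  set D := ∑ i, d i ^ 2
  have ha : 0 < a := by simp only [a]; linarith
  have hD : 0 ≤ D := sum_nonneg fun i _ => sq_nonneg (d i)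
  set t := a / (D + 1)
  have ht : 0 < t := by positivity
  have htD : t * (D + 1) = a := div_mul_cancel₀ a (by positivity)
  refine ⟨fun i => t * d i, ?_⟩
  rw [gObjR_mul_eq hq ht.le]
  have hdecrease : t * (t / 2 * D - a) < 0 := mul_neg_of_pos_of_neg ht (by nlinarith)
  linarith

lemma exists_mul_lqNormR_lt_sum_mul {q lam : ℝ} (hq : 1 < q) (hlam : 0 ≤ lam)
    {v : Fin n → ℝ} (hv : lam < lqNormR (q / (q - 1)) v) :
    ∃ d : Fin n → ℝ, lam * lqNormR q d < ∑ i, d i * v i := by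
  set p := q / (q - 1)
  have hq1 : 0 < q - 1 := by linarith
  have hp : 1 < p := (one_lt_div hq1).2 (by linarith)
  have hpq : (p - 2 + 1) * q = p := by simp only [p]; field_simp; ring
  have hpq' : 1 / p + 1 / q = 1 := by simp only [p]; field_simp; ring
  set S := ∑ i, |v i| ^ p
  have hS : 0 < S := by
    refine (sum_abs_rpow_nonneg p v).lt_of_ne fun hS => ?_
    have : lqNormR p v = 0 := by
      rw [lqNormR, ← hS, Real.zero_rpow (one_div_pos.2 (by linarith)).ne']
    linarith
  refine ⟨fun i => |v i| ^ (p - 2) * v i, ?_⟩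
  have hdv : ∀ i, |v i| ^ (p - 2) * v i * v i = |v i| ^ p := fun i => by
    rw [mul_assoc, ← sq, ← sq_abs, ← Real.rpow_two, ← Real.rpow_add' (abs_nonneg _)
      (by linarith), sub_add_cancel]
  have hdq : ∀ i, |(|v i| ^ (p - 2) * v i)| ^ q = |v i| ^ p := fun i => by
    rw [abs_mul, abs_of_nonneg (Real.rpow_nonneg (abs_nonneg _) _),
      ← Real.rpow_add_one' (abs_nonneg _) (by linarith), ← Real.rpow_mul (abs_nonneg _), hpq]
  have hnorm : lqNormR q (fun i => |v i| ^ (p - 2) * v i) = S ^ (1 / q) := by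
    simp only [lqNormR, hdq, S]
  have hS_eq : S = lqNormR p v * S ^ (1 / q) := by
    rw [lqNormR, ← Real.rpow_add hS, hpq', Real.rpow_one]
  simp only [hdv, hnorm]
  change lam * S ^ (1 / q) < S
  calc lam * S ^ (1 / q) < lqNormR p v * S ^ (1 / q) :=
        mul_lt_mul_of_pos_right hv (Real.rpow_pos_of_pos hS _)
    _ = S := hS_eq.symm

lemma sum_abs_rpow_pos_of_forall_gObjR_le {q lam : ℝ} (hq : 1 < q) (hlam : 0 ≤ lam)
    {v x : Fin n → ℝ} (hv : lam < lqNormR (q / (q - 1)) v)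
    (hx : ∀ y, gObjR q lam v x ≤ gObjR q lam v y) : 0 < ∑ i, |x i| ^ q := by
  have hq0 : 0 < q := by linarith
  obtain ⟨d, hd⟩ := exists_mul_lqNormR_lt_sum_mul hq hlam hv
  obtain ⟨y, hy⟩ := exists_gObjR_lt_gObjR_zero hq0 hd
  have hx0 : x ≠ 0 := by
    rintro rfl
    exact (hx y).not_gt hy
  obtain ⟨i, hi⟩ := Function.ne_iff.1 hx0
  exact sum_pos' (fun j _ => Real.rpow_nonneg (abs_nonneg _) q)
    ⟨i, mem_univ i, Real.rpow_pos_of_pos (abs_pos.2 hi) q⟩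

lemma hasDerivAt_gObjR_line {q lam : ℝ} (hq : 1 < q) (v d : Fin n → ℝ) {x : Fin n → ℝ}
    (hx : 0 < ∑ j, |x j| ^ q) :
    HasDerivAt (fun s => gObjR q lam v (fun j => x j + s * d j))
      (∑ j, (x j - v j) * d j +
        lam * (∑ j, |x j| ^ q) ^ (1 / q - 1) * ∑ j, |x j| ^ (q - 2) * x j * d j) 0 := by
  have hline : ∀ j, HasDerivAt (fun s : ℝ => x j + s * d j) (d j) 0 := fun j => by
    simpa using ((hasDerivAt_id (0 : ℝ)).mul_const (d j)).const_add (x j)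
  have hsq : HasDerivAt (fun s => ∑ j, (x j + s * d j - v j) ^ 2)
      (∑ j, 2 * (x j - v j) * d j) 0 :=
    HasDerivAt.fun_sum fun j _ => by simpa using ((hline j).sub_const (v j)).fun_pow 2
  have hpow : HasDerivAt (fun s => ∑ j, |x j + s * d j| ^ q)
      (∑ j, q * |x j| ^ (q - 2) * x j * d j) 0 :=
    HasDerivAt.fun_sum fun j _ =>
      (hasDerivAt_abs_rpow (x j) hq).comp_of_eq 0 (hline j) (by simp)
  have hnorm := hpow.rpow_const (p := 1 / q) (Or.inl (by simpa using hx.ne'))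
  refine ((hsq.const_mul (1 / 2)).add (hnorm.const_mul lam)).congr_deriv ?_
  simp only [zero_mul, add_zero, mul_assoc, ← mul_sum]
  field_simp

lemma eq_one_add_mul_of_forall_gObjR_le {q lam : ℝ} (hq : 1 < q) {v x : Fin n → ℝ}
    (hN : 0 < ∑ j, |x j| ^ q) (hx : ∀ y, gObjR q lam v x ≤ gObjR q lam v y) (i : Fin n) :
    v i = (1 + lam * (∑ j, |x j| ^ q) ^ (1 / q - 1) * |x i| ^ (q - 2)) * x i := by
  have hmin : IsLocalMin
      (fun s => gObjR q lam v (fun j => x j + s * (Pi.single i 1 : Fin n → ℝ) j)) 0 :=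
    Filter.Eventually.of_forall fun s => by simpa using hx _
  have hcrit := hmin.hasDerivAt_eq_zero (hasDerivAt_gObjR_line hq v (Pi.single i 1) hN)
  simp only [Pi.single_apply, mul_ite, mul_one, mul_zero, sum_ite_eq', mem_univ, if_true]
    at hcrit
  linear_combination -hcrit

lemma exists_pos_eq_one_add_mul_of_forall_gObjR_le {q lam : ℝ} (hq : 1 < q) (hlam : 0 < lam)
    {v x : Fin n → ℝ} (hv : lam < lqNormR (q / (q - 1)) v)
    (hx : ∀ y, gObjR q lam v x ≤ gObjR q lam v y) :
    ∃ K > 0, ∀ i, v i = (1 + K * |x i| ^ (q - 2)) * x i := by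
  have hN := sum_abs_rpow_pos_of_forall_gObjR_le hq hlam.le hv hx
  exact ⟨_, mul_pos hlam (Real.rpow_pos_of_pos hN _),
    eq_one_add_mul_of_forall_gObjR_le hq hN hx⟩

lemma Real.sign_mul_of_pos {a : ℝ} (ha : 0 < a) (t : ℝ) : Real.sign (a * t) = Real.sign t := by
  rcases lt_trichotomy t 0 with ht | rfl | ht
  · rw [Real.sign_of_neg (mul_neg_of_pos_of_neg ha ht), Real.sign_of_neg ht]
  · rw [mul_zero]
  · rw [Real.sign_of_pos (mul_pos ha ht), Real.sign_of_pos ht]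

lemma sign_eq_sign_of_forall_gObjR_le {q lam : ℝ} (hq : 1 < q) (hlam : 0 < lam)
    {v x : Fin n → ℝ} (hv : lam < lqNormR (q / (q - 1)) v)
    (hx : ∀ y, gObjR q lam v x ≤ gObjR q lam v y) (i : Fin n) :
    Real.sign (x i) = Real.sign (v i) := by
  obtain ⟨K, hK, hfoc⟩ := exists_pos_eq_one_add_mul_of_forall_gObjR_le hq hlam hv hx
  rw [hfoc i, Real.sign_mul_of_pos (by positivity)]

lemma abs_lt_abs_of_forall_gObjR_le {q lam : ℝ} (hq : 1 < q) (hlam : 0 < lam)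
    {v x : Fin n → ℝ} (hv : lam < lqNormR (q / (q - 1)) v)
    (hx : ∀ y, gObjR q lam v x ≤ gObjR q lam v y) {i : Fin n} (hvi : v i ≠ 0) :
    0 < |x i| ∧ |x i| < |v i| := by
  obtain ⟨K, hK, hfoc⟩ := exists_pos_eq_one_add_mul_of_forall_gObjR_le hq hlam hv hx
  have hxi : 0 < |x i| := abs_pos.2 fun h => hvi (by rw [hfoc i, h, mul_zero])
  have hKx : 0 < K * |x i| ^ (q - 2) := by positivity
  refine ⟨hxi, ?_⟩
  rw [hfoc i, abs_mul, abs_of_pos (by positivity : 0 < 1 + K * |x i| ^ (q - 2))]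
  nlinarith

lemma eq_zero_of_forall_gObjR_le {q lam : ℝ} (hq : 1 < q) (hlam : 0 < lam)
    {v x : Fin n → ℝ} (hv : lam < lqNormR (q / (q - 1)) v)
    (hx : ∀ y, gObjR q lam v x ≤ gObjR q lam v y) {i : Fin n} (hvi : v i = 0) : x i = 0 := by
  obtain ⟨K, hK, hfoc⟩ := exists_pos_eq_one_add_mul_of_forall_gObjR_le hq hlam hv hx
  rw [hfoc i] at hvi
  exact (mul_eq_zero.1 hvi).resolve_left (by positivity)

lemma eq_sign_mul_of_forall_gObjR_le {q lam : ℝ} (hq : 1 ≤ q) (hlam : 0 ≤ lam)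
    {v x y : Fin n → ℝ} (hx : ∀ z, gObjR q lam v x ≤ gObjR q lam v z)
    (hy : ∀ z, gObjR q lam (fun i => |v i|) y ≤ gObjR q lam (fun i => |v i|) z)
    (hy0 : ∀ i, v i = 0 → y i = 0) : x = fun i => Real.sign (v i) * y i := by
  -- `Real.sign` vanishes where `v` does, so flip signs with a `±1` pattern instead
  set ε : Fin n → ℝ := fun i => if v i < 0 then -1 else 1
  have hε : ∀ i, |ε i| = 1 := fun i => by simp only [ε]; split_ifs <;> simp
  have hεv : (fun i => ε i * |v i|) = v := funext fun i => by
    simp only [ε]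
    split_ifs with h
    · rw [abs_of_neg h, neg_one_mul, neg_neg]
    · rw [abs_of_nonneg (not_lt.1 h), one_mul]
  have hεy : (fun i => ε i * y i) = fun i => Real.sign (v i) * y i := funext fun i => by
    rcases lt_trichotomy (v i) 0 with h | h | h
    · simp [ε, h, Real.sign_of_neg h]
    · simp [h, hy0 i h]
    · simp [ε, h.not_gt, Real.sign_of_pos h]
  have hεy_min := forall_gObjR_mul_le hε hy
  rw [hεv] at hεy_min
  rw [← hεy]
  exact eq_of_forall_gObjR_le hq hlam hx hεy_min

end

/-- Let `1 < q < ∞`, `v ∈ ℝⁿ`, `0 < λ < ‖v‖_{q̄}` (`q̄ = q/(q−1)`), and let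
`x* = π_q(v)` be the minimizer of `g`.  Then `sgn(x*ᵢ) = sgn(vᵢ)` for all `i`;
`0 < |x*ᵢ| < |vᵢ|` whenever `vᵢ ≠ 0`; `x*ᵢ = 0` whenever `vᵢ = 0`; and
`π_q(v) = sgn(v) ⊙ π_q(|v|)` (componentwise). -/
theorem stmt3 {n : ℕ} (q : ℝ) (hq : 1 < q) (v : Fin n → ℝ) (lam : ℝ)
    (hlam : 0 < lam) (hlam' : lam < lqNormR (q / (q - 1)) v)
    (x : Fin n → ℝ) (hx : ∀ y : Fin n → ℝ, gObjR q lam v x ≤ gObjR q lam v y) :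
    (∀ i, Real.sign (x i) = Real.sign (v i)) ∧
    (∀ i, v i ≠ 0 → 0 < |x i| ∧ |x i| < |v i|) ∧
    (∀ i, v i = 0 → x i = 0) ∧
    (∀ y : Fin n → ℝ,
      (∀ z : Fin n → ℝ,
          gObjR q lam (fun i => |v i|) y ≤ gObjR q lam (fun i => |v i|) z) →
        x = fun i => Real.sign (v i) * y i) := by
  have hlam_abs : lam < lqNormR (q / (q - 1)) (fun i => |v i|) := by
    rwa [lqNormR_congr_abs fun i => abs_abs (v i)]
  refine ⟨sign_eq_sign_of_forall_gObjR_le hq hlam hlam' hx,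
    fun _ => abs_lt_abs_of_forall_gObjR_le hq hlam hlam' hx,
    fun _ => eq_zero_of_forall_gObjR_le hq hlam hlam' hx, fun y hy => ?_⟩
  refine eq_sign_mul_of_forall_gObjR_le hq.le hlam.le hx hy fun i hvi => ?_
  exact eq_zero_of_forall_gObjR_le hq hlam hlam_abs hy (by rw [hvi, abs_zero])
end

section
/- Let 0 < λ'' < λ' < λ_max, let θ*(λ') be the Euclidean projection of Y/λ' onto the dual feasible set ℱ (which contains 0), and set a = (1/2)(Y/λ'' − θ*(λ')) and b = Y/λ' − θ*(λ'). Then ⟨a, b⟩ ≥ 0. -/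
open scoped ENNReal BigOperators
open Matrix

/-- The vector ℓq norm for q ∈ [1,∞]. -/
noncomputable def lqNorm {n : ℕ} (q : ℝ≥0∞) (x : Fin n → ℝ) : ℝ :=
  if q = ⊤ then ⨆ i, |x i| else (∑ i, |x i| ^ q.toReal) ^ (1 / q.toReal)

/-
Since `ℱ` is star-shaped about `0`, the segment `t • θ*`, `t ∈ [0, 1]`, stays in `ℱ`,
and minimality of `θ*` along it gives `⟪y - θ*, θ*⟫ ≥ 0` for `y = Y/λ'`.
With `c = λ'/λ'' ≥ 1` one has `Y/λ'' - θ* = c (y - θ*) + (c - 1) θ*`, so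
`2⟪a, b⟫ = c ‖y - θ*‖² + (c - 1) ⟪θ*, y - θ*⟫ ≥ 0`.
-/

open RealInnerProductSpace

section lqNorm

variable {n : ℕ} (q : ℝ≥0∞) (x : Fin n → ℝ)

lemma lqNorm_nonneg : 0 ≤ lqNorm q x := by
  unfold lqNorm
  split_ifs
  · exact Real.iSup_nonneg fun i => abs_nonneg (x i)
  · exact Real.rpow_nonneg (Finset.sum_nonneg fun i _ => Real.rpow_nonneg (abs_nonneg _) _) _

-- Degenerate exponent: `1 / 0 = 0` in `ℝ`, so every vector has "norm" `1`.
lemma lqNorm_zero : lqNorm 0 x = 1 := by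
  simp [lqNorm]

lemma lqNorm_smul (hq : q ≠ 0) {t : ℝ} (ht : 0 ≤ t) :
    lqNorm q (t • x) = t * lqNorm q x := by
  unfold lqNorm
  split_ifs with htop
  · rw [Real.mul_iSup_of_nonneg ht]
    simp only [Pi.smul_apply, smul_eq_mul, abs_mul, abs_of_nonneg ht]
  · have hr : q.toReal ≠ 0 := ENNReal.toReal_ne_zero.mpr ⟨hq, htop⟩
    simp only [Pi.smul_apply, smul_eq_mul, abs_mul, abs_of_nonneg ht,
      Real.mul_rpow ht (abs_nonneg _), ← Finset.mul_sum]
    rw [Real.mul_rpow (Real.rpow_nonneg ht _)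
        (Finset.sum_nonneg fun i _ => Real.rpow_nonneg (abs_nonneg _) _),
      ← Real.rpow_mul ht, mul_one_div_cancel hr, Real.rpow_one]

lemma lqNorm_smul_le {t : ℝ} (ht₀ : 0 ≤ t) (ht₁ : t ≤ 1) :
    lqNorm q (t • x) ≤ lqNorm q x := by
  rcases eq_or_ne q 0 with rfl | hq
  · rw [lqNorm_zero, lqNorm_zero]
  · rw [lqNorm_smul q x hq ht₀]
    exact mul_le_of_le_one_left (lqNorm_nonneg q x) ht₁

end lqNorm

section Projection

variable {E : Type*} [NormedAddCommGroup E] [InnerProductSpace ℝ E]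

lemma real_inner_sub_nonneg_of_forall_norm_sub_le_norm_sub_smul {y p : E}
    (h : ∀ t : ℝ, 0 ≤ t → t ≤ 1 → ‖y - p‖ ≤ ‖y - t • p‖) :
    0 ≤ ⟪y - p, p⟫ := by
  set I := ⟪y - p, p⟫
  have hquad : ∀ s : ℝ, 0 ≤ s → s ≤ 1 → 0 ≤ s * (2 * I + s * ‖p‖ ^ 2) := by
    intro s hs₀ hs₁
    have hle := pow_le_pow_left₀ (norm_nonneg _) (h (1 - s) (by linarith) (by linarith)) 2
    have hexp : y - (1 - s) • p = (y - p) + s • p := by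
      rw [sub_smul, one_smul]; abel
    rw [hexp, norm_add_sq_real, real_inner_smul_right, norm_smul, Real.norm_of_nonneg hs₀] at hle
    nlinarith
  by_contra! hI
  have hN : 0 < ‖p‖ ^ 2 := by nlinarith [hquad 1 zero_le_one le_rfl]
  -- `s = -I / ‖p‖²` makes `2 I + s ‖p‖² = I` negative.
  have hs₁ : -I / ‖p‖ ^ 2 ≤ 1 := by
    rw [div_le_one hN]; nlinarith [hquad 1 zero_le_one le_rfl]
  have hs := hquad (-I / ‖p‖ ^ 2) (div_nonneg (by linarith) hN.le) hs₁
  rw [div_mul_cancel₀ _ hN.ne'] at hs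
  nlinarith [div_pos (neg_pos.mpr hI) hN]

lemma real_inner_smul_sub_sub_nonneg {y p : E} (hp : 0 ≤ ⟪y - p, p⟫) {c : ℝ}
    (hc : 1 ≤ c) :
    0 ≤ ⟪c • y - p, y - p⟫ := by
  have hsplit : c • y - p = c • (y - p) + (c - 1) • p := by
    rw [smul_sub, sub_smul, one_smul]; abel
  rw [hsplit, inner_add_left, real_inner_smul_left, real_inner_smul_left,
    real_inner_self_eq_norm_sq, real_inner_comm]
  have hc₀ : 0 ≤ c := zero_le_one.trans hc
  have hc₁ : 0 ≤ c - 1 := sub_nonneg.mpr hc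
  positivity

end Projection

theorem stmt14_general {m s : ℕ} (p : Fin s → ℕ)
    (B : (i : Fin s) → Matrix (Fin m) (Fin (p i)) ℝ) (Y : Fin m → ℝ)
    (qb : ℝ≥0∞)
    (lam' lam'' : ℝ) (h0 : 0 < lam'') (h1 : lam'' < lam')
    (θp : Fin m → ℝ)
    (hθpF : ∀ i, lqNorm qb ((B i)ᵀ.mulVec θp) ≤ 1)
    (hθpProj : ∀ θ : Fin m → ℝ, (∀ i, lqNorm qb ((B i)ᵀ.mulVec θ) ≤ 1) →
      ∑ k, (Y k / lam' - θp k) ^ 2 ≤ ∑ k, (Y k / lam' - θ k) ^ 2) :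
    0 ≤ ∑ k, (1 / 2 * (Y k / lam'' - θp k)) * (Y k / lam' - θp k) := by
  set y : EuclideanSpace ℝ (Fin m) := WithLp.toLp 2 fun k => Y k / lam'
  have hnorm_sq : ∀ θ : Fin m → ℝ,
      ‖y - WithLp.toLp 2 θ‖ ^ 2 = ∑ k, (Y k / lam' - θ k) ^ 2 := by
    intro θ
    simp [y, EuclideanSpace.real_norm_sq_eq]
  have hmin : ∀ t : ℝ, 0 ≤ t → t ≤ 1 →
      ‖y - WithLp.toLp 2 θp‖ ≤ ‖y - t • WithLp.toLp 2 θp‖ := by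
    intro t ht₀ ht₁
    have hfeas : ∀ i, lqNorm qb ((B i)ᵀ *ᵥ (t • θp)) ≤ 1 := fun i => by
      rw [mulVec_smul]
      exact (lqNorm_smul_le _ _ ht₀ ht₁).trans (hθpF i)
    have hsq := hθpProj _ hfeas
    rw [← hnorm_sq, ← hnorm_sq, WithLp.toLp_smul] at hsq
    exact le_of_sq_le_sq hsq (norm_nonneg _)
  have hc : 1 ≤ lam' / lam'' := (one_le_div h0).mpr h1.le
  have hinner := real_inner_smul_sub_sub_nonneg
    (real_inner_sub_nonneg_of_forall_norm_sub_le_norm_sub_smul hmin) hc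
  have hY : ∀ k, lam' / lam'' * (Y k / lam') = Y k / lam'' := fun k => by
    field_simp [(h0.trans h1).ne']
  calc 0 ≤ 1 / 2 * ⟪(lam' / lam'') • y - WithLp.toLp 2 θp, y - WithLp.toLp 2 θp⟫ :=
        mul_nonneg (by norm_num) hinner
    _ = _ := by
        simp [y, PiLp.inner_apply, hY, Finset.mul_sum, mul_comm, mul_assoc]

/-- Let `0 < λ'' < λ' < λ_max`, let `θ*(λ')` be the Euclidean projection of
`Y/λ'` onto the dual feasible set `ℱ = {θ : ‖Bᵢᵀθ‖_{q̄} ≤ 1 ∀i}`, and set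
`a = (1/2)(Y/λ'' − θ*(λ'))` and `b = Y/λ' − θ*(λ')`.  Then `⟨a, b⟩ ≥ 0`. -/
theorem stmt14 {m s : ℕ} [NeZero s] (p : Fin s → ℕ)
    (B : (i : Fin s) → Matrix (Fin m) (Fin (p i)) ℝ) (Y : Fin m → ℝ)
    (q qb : ℝ≥0∞) (hq : 1 ≤ q) (hconj : 1 / q + 1 / qb = 1)
    (lam' lam'' : ℝ) (h0 : 0 < lam'') (h1 : lam'' < lam')
    (h2 : lam' < Finset.univ.sup' Finset.univ_nonempty
        (fun i => lqNorm qb ((B i)ᵀ.mulVec Y)))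
    (θp : Fin m → ℝ)
    (hθpF : ∀ i, lqNorm qb ((B i)ᵀ.mulVec θp) ≤ 1)
    (hθpProj : ∀ θ : Fin m → ℝ, (∀ i, lqNorm qb ((B i)ᵀ.mulVec θ) ≤ 1) →
      ∑ k, (Y k / lam' - θp k) ^ 2 ≤ ∑ k, (Y k / lam' - θ k) ^ 2) :
    0 ≤ ∑ k, (1 / 2 * (Y k / lam'' - θp k)) * (Y k / lam' - θp k) :=
  stmt14_general p B Y qb lam' lam'' h0 h1 θp hθpF hθpProj
end
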